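/- arXiv:math-ph/0107003 — 3 statements merged into one kernel-verified Lean document; each statement's English description precedes it below -/
import Mathlib

section
/- Let φ be a normalized eigenvector of h^U_Λ (finite-U one-particle Falicov-Kimball Hamiltonian on ℤ^d with potential U outside Λ) with eigenvalue e ≤ 4d, where U > 4d. Then Σ over eigenvectors with eigenvalue ≤ 4d of |φ_j(x)|² is at most (2d/(U-2d))^{2·dist(x,Λ)} for every x ∈ ℤ^d. -/
set_option maxHeartbeats 1000000


open scoped BigOperators
open Finset
open scoped Classical

abbrev Zd (d : ℕ) : Type := Fin d → ℤ

/-- Graph (ℓ¹) distance from a point to a finite set Λ ⊂ ℤ^d. -/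
noncomputable def distTo {d : ℕ} (Λ : Finset (Zd d)) (x : Zd d) : ℕ :=
  sInf {n : ℕ | ∃ y ∈ Λ, (∑ i, (x i - y i).natAbs) = n}

lemma distTo_le {d : ℕ} (Λ : Finset (Zd d)) (x y : Zd d) (hy : y ∈ Λ) :
    distTo Λ x ≤ ∑ i, (x i - y i).natAbs :=
  Nat.sInf_le ⟨y, hy, rfl⟩

lemma distTo_exists {d : ℕ} (Λ : Finset (Zd d)) (hΛ : Λ.Nonempty) (x : Zd d) :
    ∃ y ∈ Λ, (∑ i, (x i - y i).natAbs) = distTo Λ x := by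
  obtain ⟨y, hy⟩ := hΛ
  have : distTo Λ x ∈ {n : ℕ | ∃ y ∈ Λ, (∑ i, (x i - y i).natAbs) = n} :=
    Nat.sInf_mem ⟨_, y, hy, rfl⟩
  exact this

lemma distTo_eq_zero {d : ℕ} (Λ : Finset (Zd d)) (x : Zd d) (hx : x ∈ Λ) :
    distTo Λ x = 0 := by
  have h := distTo_le Λ x x hx
  simpa using h

lemma distTo_succ_le {d : ℕ} (Λ : Finset (Zd d)) (hΛ : Λ.Nonempty) (x : Zd d)
    (i : Fin d) (σ : ℤ) (hσ : σ.natAbs = 1) :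
    distTo Λ x ≤ distTo Λ (x + Pi.single i σ) + 1 := by
  obtain ⟨z, hz, hsum⟩ := distTo_exists Λ hΛ (x + Pi.single i σ)
  have h1 : distTo Λ x ≤ ∑ k, (x k - z k).natAbs := distTo_le Λ x z hz
  have h2 : ∀ k, (x k - z k).natAbs
      ≤ (((x + Pi.single i σ : Zd d)) k - z k).natAbs + ((Pi.single i σ : Zd d) k).natAbs := by
    intro k
    have h : x k - z k = (((x + Pi.single i σ : Zd d)) k - z k) - (Pi.single i σ : Zd d) k := by
      simp only [Pi.add_apply]; ring
    rw [h]
    exact Int.natAbs_sub_le _ _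
  have h3 : ∑ k, ((Pi.single i σ : Zd d) k).natAbs = 1 := by
    rw [Finset.sum_eq_single i]
    · simp [hσ]
    · intro k _ hk; simp [Pi.single_eq_of_ne hk]
    · simp
  calc distTo Λ x ≤ ∑ k, (x k - z k).natAbs := h1
    _ ≤ ∑ k, ((((x + Pi.single i σ : Zd d)) k - z k).natAbs + ((Pi.single i σ : Zd d) k).natAbs) :=
        Finset.sum_le_sum fun k _ => h2 k
    _ = (∑ k, (((x + Pi.single i σ : Zd d)) k - z k).natAbs) + 1 := by
        rw [Finset.sum_add_distrib, h3]
    _ = distTo Λ (x + Pi.single i σ) + 1 := by rw [hsum]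

/-- for an orthonormal family of eigenvectors of the finite-U
Falicov-Kimball one-particle Hamiltonian h^U_Λ with eigenvalues ≤ 4d (U > 4d),
Σ_j |φ_j(x)|² ≤ (2d/(U-2d))^{2 dist(x,Λ)} for every x ∈ ℤ^d. -/
theorem stmt14 {d : ℕ} (Λ : Finset (Zd d)) (hΛ : Λ.Nonempty) (U : ℝ)
    (hU : 4 * d < U) (M : ℕ)
    (φ : Fin M → lp (fun _ : Zd d => ℂ) 2) (e : Fin M → ℝ)
    (hortho : Orthonormal ℂ φ)
    (hbound : ∀ j, e j ≤ 4 * d)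
    (heig : ∀ j, ∀ x : Zd d,
      -(∑ i : Fin d, ∑ σ ∈ ({-1, 1} : Finset ℤ), (φ j : Zd d → ℂ) (x + Pi.single i σ))
        + 2 * d * (φ j : Zd d → ℂ) x
        + U * (if x ∈ Λ then 0 else 1) * (φ j : Zd d → ℂ) x
        = (e j : ℂ) * (φ j : Zd d → ℂ) x) :
    ∀ x : Zd d,
      (∑ j, ‖(φ j : Zd d → ℂ) x‖^2)
        ≤ (2 * d / (U - 2 * d)) ^ (2 * distTo Λ x) := by
  have hdnn : (0:ℝ) ≤ (d:ℝ) := Nat.cast_nonneg d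
  have hUd : (0:ℝ) < U - 2 * d := by linarith
  set r : ℝ := 2 * (d:ℝ) / (U - 2 * d) with hr
  -- Bessel's inequality: Σ_j ‖φ_j(x)‖² ≤ 1 everywhere
  have bessel : ∀ x : Zd d, (∑ j, ‖(φ j : Zd d → ℂ) x‖^2) ≤ 1 := by
    intro x
    have hnorm : ‖(lp.single 2 x (1:ℂ) : lp (fun _ : Zd d => ℂ) 2)‖ = 1 := by
      have h := lp.norm_single (p := 2) (E := fun _ : Zd d => ℂ) (by norm_num)
        x (1:ℂ)
      simpa using h
    have h := hortho.sum_inner_products_le (s := Finset.univ)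
      ((lp.single 2 x (1:ℂ) : lp (fun _ : Zd d => ℂ) 2))
    rw [hnorm, one_pow] at h
    refine le_trans (le_of_eq ?_) h
    refine Finset.sum_congr rfl fun j _ => ?_
    rw [lp.inner_single_right]
    simp [RCLike.inner_apply]
  -- Main inductive claim
  have key : ∀ n : ℕ, ∀ x : Zd d, n ≤ distTo Λ x →
      (∑ j, ‖(φ j : Zd d → ℂ) x‖^2) ≤ r ^ (2 * n) := by
    intro n
    induction n with
    | zero => intro x _; simpa using bessel x
    | succ n ih =>
      intro x hx
      have hxΛ : x ∉ Λ := by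
        intro hmem
        rw [distTo_eq_zero Λ x hmem] at hx
        omega
      set s : Finset (Fin d × ℤ) := Finset.univ ×ˢ ({-1, 1} : Finset ℤ) with hs
      have hcard : (s.card : ℝ) = 2 * d := by
        have hc2 : ({-1, 1} : Finset ℤ).card = 2 := by decide
        have hcc : s.card = d * 2 := by
          rw [hs, Finset.card_product, Finset.card_univ, Fintype.card_fin, hc2]
        rw [hcc]; push_cast; ring
      have hnb : ∀ p ∈ s, n ≤ distTo Λ (x + Pi.single p.1 p.2) := by
        intro p hp
        have hσ : (p.2).natAbs = 1 := by
          rw [hs, Finset.mem_product] at hp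
          have := hp.2
          simp only [Finset.mem_insert, Finset.mem_singleton] at this
          rcases this with h | h <;> simp [h]
        have := distTo_succ_le Λ hΛ x p.1 p.2 hσ
        omega
      -- per-eigenvector bound
      have hkey : ∀ j, (U - 2*d)^2 * ‖(φ j : Zd d → ℂ) x‖^2 ≤
          (2*(d:ℝ)) * ∑ p ∈ s, ‖(φ j : Zd d → ℂ) (x + Pi.single p.1 p.2)‖^2 := by
        intro j
        have hcge : U - 2*d ≤ U + 2*d - e j := by have := hbound j; linarith
        have hcpos : (0:ℝ) < U + 2*d - e j := lt_of_lt_of_le hUd hcge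
        have heq : ((U + 2*(d:ℝ) - e j : ℝ) : ℂ) * (φ j : Zd d → ℂ) x
            = ∑ p ∈ s, (φ j : Zd d → ℂ) (x + Pi.single p.1 p.2) := by
          have h := heig j x
          rw [if_neg hxΛ] at h
          rw [hs, Finset.sum_product]
          push_cast
          linear_combination h
        have h1 : (U + 2*d - e j) * ‖(φ j : Zd d → ℂ) x‖
            ≤ ∑ p ∈ s, ‖(φ j : Zd d → ℂ) (x + Pi.single p.1 p.2)‖ := by
          have hn : ‖((U + 2*(d:ℝ) - e j : ℝ) : ℂ) * (φ j : Zd d → ℂ) x‖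
              = (U + 2*d - e j) * ‖(φ j : Zd d → ℂ) x‖ := by
            rw [norm_mul, Complex.norm_real, Real.norm_eq_abs, abs_of_pos hcpos]
          rw [← hn, heq]
          exact norm_sum_le _ _
        have h2 : (U - 2*d) * ‖(φ j : Zd d → ℂ) x‖
            ≤ ∑ p ∈ s, ‖(φ j : Zd d → ℂ) (x + Pi.single p.1 p.2)‖ := by
          refine le_trans ?_ h1
          exact mul_le_mul_of_nonneg_right hcge (norm_nonneg _)
        have h3 : ((U - 2*d) * ‖(φ j : Zd d → ℂ) x‖)^2
            ≤ (∑ p ∈ s, ‖(φ j : Zd d → ℂ) (x + Pi.single p.1 p.2)‖)^2 := by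
          apply pow_le_pow_left₀ (by positivity) h2
        have h4 : (∑ p ∈ s, ‖(φ j : Zd d → ℂ) (x + Pi.single p.1 p.2)‖)^2
            ≤ (s.card : ℝ) * ∑ p ∈ s, ‖(φ j : Zd d → ℂ) (x + Pi.single p.1 p.2)‖^2 :=
          sq_sum_le_card_mul_sum_sq
        have h5 := le_trans h3 h4
        rw [hcard] at h5
        nlinarith [h5, norm_nonneg ((φ j : Zd d → ℂ) x)]
      have hkeysum := Finset.sum_le_sum (s := Finset.univ) fun j _ => hkey j
      rw [← Finset.mul_sum, ← Finset.mul_sum, Finset.sum_comm] at hkeysum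
      have hE := Finset.sum_le_sum fun p hp => ih _ (hnb p hp)
      rw [Finset.sum_const, nsmul_eq_mul, hcard] at hE
      have hF := mul_le_mul_of_nonneg_left hE (by positivity : (0:ℝ) ≤ 2*(d:ℝ))
      have hpow : r ^ (2*(n+1)) = (2*(d:ℝ))^2 * r^(2*n) / (U - 2*d)^2 := by
        have h2d : r^2 = (2*(d:ℝ))^2 / (U - 2*d)^2 := by rw [hr, div_pow]
        rw [show 2*(n+1) = 2*n + 2 by ring, pow_add, h2d]
        ring
      rw [hpow, le_div_iff₀ (by positivity)]
      nlinarith [hkeysum, hF]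
  intro x
  exact key (distTo Λ x) x le_rfl
end

section
/- In ℤ^d, the number of sites at graph distance exactly n ≥ 1 from a finite set Λ is at most 2^d · C(n+d-1, d-1) · |∂Λ|, where C denotes the binomial coefficient. -/
/-!
A site `x` at distance `n ≥ 1` from `Λ` has a nearest point `y ∈ Λ`, and `y` lies on `∂Λ`: the
lattice neighbour of `y` one step towards `x` is strictly closer to `x`, so it is not in `Λ`.
Hence the sites at distance `n` are covered by the ℓ¹-spheres of radius `n` around the points of
`∂Λ`. A point of such a sphere is determined by the signs and the absolute values of its
coordinate differences from the centre; the absolute values form a composition of `n` into `d`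
parts, of which there are `C(n + d - 1, d - 1)` (stars and bars).
-/

open scoped BigOperators
open Finset
open scoped Classical

noncomputable def bdry {d : ℕ} (Λ : Finset (Zd d)) : Finset (Zd d) :=
  Λ.filter fun x => ∃ i : Fin d, ∃ σ ∈ ({-1, 1} : Finset ℤ), x + Pi.single i σ ∉ Λ

lemma Int.injective_decide_nonneg_natAbs :
    Function.Injective fun a : ℤ => (decide (0 ≤ a), a.natAbs) := by
  intro a b h
  simp only [Prod.mk.injEq, decide_eq_decide] at h
  omega

lemma Int.natAbs_sub_sign_add_one {a : ℤ} (ha : a ≠ 0) : (a - a.sign).natAbs + 1 = a.natAbs := by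
  rcases ha.lt_or_gt with h | h
  · rw [Int.sign_eq_neg_one_of_neg h]; omega
  · rw [Int.sign_eq_one_of_pos h]; omega

lemma Int.sign_mem_of_ne_zero {a : ℤ} (ha : a ≠ 0) : a.sign ∈ ({-1, 1} : Finset ℤ) := by
  rcases ha.lt_or_gt with h | h
  · simp [Int.sign_eq_neg_one_of_neg h]
  · simp [Int.sign_eq_one_of_pos h]

lemma Nat.multichoose_le_choose_add_sub_one (d n : ℕ) :
    Nat.multichoose d n ≤ (n + d - 1).choose (d - 1) := by
  rw [Nat.multichoose_eq]
  rcases d with _ | d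
  · rcases n with _ | n <;> simp
  · rw [show d + 1 + n - 1 = n + d by omega, Nat.choose_symm_add]
    simp

section Lattice

variable {d : ℕ}

def l1Dist (x y : Zd d) : ℕ := ∑ i, (x i - y i).natAbs

lemma l1Dist_add_single_sign_add_one {x y : Zd d} {i : Fin d} (hi : x i ≠ y i) :
    l1Dist x (y + Pi.single i (x i - y i).sign) + 1 = l1Dist x y := by
  have hrest : ∀ j ∈ ({i}ᶜ : Finset (Fin d)),
      (x j - (y + Pi.single i (x i - y i).sign : Zd d) j).natAbs = (x j - y j).natAbs := by
    intro j hj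
    rw [Pi.add_apply, Pi.single_eq_of_ne (by simpa using hj), add_zero]
  have hstep :
      (x i - (y + Pi.single i (x i - y i).sign : Zd d) i).natAbs + 1 = (x i - y i).natAbs := by
    rw [Pi.add_apply, Pi.single_eq_same, ← sub_sub]
    exact Int.natAbs_sub_sign_add_one (sub_ne_zero.2 hi)
  unfold l1Dist
  rw [Fintype.sum_eq_add_sum_compl i, Fintype.sum_eq_add_sum_compl i, sum_congr rfl hrest]
  omega

lemma distTo_le_l1Dist {Λ : Finset (Zd d)} {x y : Zd d} (hy : y ∈ Λ) :
    distTo Λ x ≤ l1Dist x y :=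
  Nat.sInf_le ⟨y, hy, rfl⟩

lemma exists_mem_l1Dist_eq_distTo {Λ : Finset (Zd d)} {x : Zd d} (h : 0 < distTo Λ x) :
    ∃ y ∈ Λ, l1Dist x y = distTo Λ x :=
  Nat.sInf_mem (Nat.nonempty_of_pos_sInf h)

lemma exists_mem_bdry_l1Dist_eq_distTo {Λ : Finset (Zd d)} {x : Zd d} (h : 0 < distTo Λ x) :
    ∃ y ∈ bdry Λ, l1Dist x y = distTo Λ x := by
  obtain ⟨y, hyΛ, hy⟩ := exists_mem_l1Dist_eq_distTo h
  obtain ⟨i, hi⟩ : ∃ i, x i ≠ y i := by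
    by_contra! hxy
    simp [← hy, l1Dist, hxy] at h
  refine ⟨y, mem_filter.2 ⟨hyΛ, i, _, Int.sign_mem_of_ne_zero (sub_ne_zero.2 hi), fun hz => ?_⟩, hy⟩
  have hle := distTo_le_l1Dist (x := x) hz
  have hcloser := l1Dist_add_single_sign_add_one hi
  omega

noncomputable def l1SphereCode (y : Zd d) (n : ℕ) :
    {x : Zd d // l1Dist x y = n} → (Fin d → Bool) × Sym (Fin d) n :=
  fun x => (fun i => decide (0 ≤ x.1 i - y i),
    (Sym.equivNatSumOfFintype (Fin d) n).symm ⟨fun i => (x.1 i - y i).natAbs, x.2⟩)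

lemma l1SphereCode_injective (y : Zd d) (n : ℕ) : Function.Injective (l1SphereCode y n) := by
  intro x x' h
  simp only [l1SphereCode, Prod.mk.injEq, EmbeddingLike.apply_eq_iff_eq] at h
  obtain ⟨hsign, habs⟩ := h
  ext i
  have := Int.injective_decide_nonneg_natAbs
    (Prod.ext (congrFun hsign i) (congrFun (congrArg Subtype.val habs) i))
  omega

lemma finite_setOf_l1Dist_eq (y : Zd d) (n : ℕ) : {x : Zd d | l1Dist x y = n}.Finite :=
  Set.finite_coe_iff.1 (Finite.of_injective _ (l1SphereCode_injective y n))

lemma ncard_setOf_l1Dist_eq_le (y : Zd d) (n : ℕ) :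
    {x : Zd d | l1Dist x y = n}.ncard ≤ 2 ^ d * Nat.multichoose d n := by
  calc {x : Zd d | l1Dist x y = n}.ncard
      ≤ Nat.card ((Fin d → Bool) × Sym (Fin d) n) :=
        Nat.card_le_card_of_injective _ (l1SphereCode_injective y n)
    _ = 2 ^ d * Nat.multichoose d n := by
        simp [Nat.card_eq_fintype_card, Sym.card_sym_eq_multichoose]

end Lattice

theorem stmt15_general {d : ℕ} (Λ : Finset (Zd d)) (n : ℕ) (hn : 1 ≤ n) :
    Set.ncard {x : Zd d | distTo Λ x = n}
      ≤ 2^d * (n + d - 1).choose (d - 1) * (bdry Λ).card := by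
  have hcover : {x : Zd d | distTo Λ x = n} ⊆ ⋃ y ∈ bdry Λ, {x | l1Dist x y = n} := by
    intro x hx
    obtain ⟨y, hy, hxy⟩ := exists_mem_bdry_l1Dist_eq_distTo (Λ := Λ) (x := x) (by rw [hx]; omega)
    exact Set.mem_biUnion hy (hxy.trans hx)
  have hfin : (⋃ y ∈ bdry Λ, {x | l1Dist x y = n}).Finite :=
    (bdry Λ).finite_toSet.biUnion fun y _ => finite_setOf_l1Dist_eq y n
  calc Set.ncard {x : Zd d | distTo Λ x = n}
      ≤ (⋃ y ∈ bdry Λ, {x | l1Dist x y = n}).ncard := Set.ncard_le_ncard hcover hfin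
    _ ≤ ∑ y ∈ bdry Λ, {x | l1Dist x y = n}.ncard := (bdry Λ).set_ncard_biUnion_le _
    _ ≤ ∑ _y ∈ bdry Λ, 2 ^ d * (n + d - 1).choose (d - 1) := sum_le_sum fun y _ =>
        (ncard_setOf_l1Dist_eq_le y n).trans
          (Nat.mul_le_mul_left _ (Nat.multichoose_le_choose_add_sub_one d n))
    _ = 2 ^ d * (n + d - 1).choose (d - 1) * (bdry Λ).card := by
        rw [sum_const, smul_eq_mul, mul_comm]

/-- in ℤ^d, the number of sites at graph distance exactly n ≥ 1 from a
finite set Λ is at most 2^d · C(n+d-1, d-1) · |∂Λ|. -/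
theorem stmt15 {d : ℕ} (Λ : Finset (Zd d)) (hΛ : Λ.Nonempty) (n : ℕ) (hn : 1 ≤ n) :
    Set.ncard {x : Zd d | distTo Λ x = n}
      ≤ 2^d * (n + d - 1).choose (d - 1) * (bdry Λ).card :=
  stmt15_general Λ n hn
end

section
/- The map γ: [-π,π] → ℝ defined by γ(ξ) = sign(ξ)·√(2(1-cos ξ)) satisfies γ(ξ') - γ(ξ) ≥ (ξ'-ξ)²/(4π) whenever -π ≤ ξ ≤ ξ' ≤ π and γ(ξ') > γ(ξ). -/
open Real

lemma gamma_eq (ξ : ℝ) (hl : -π ≤ ξ) (hr : ξ ≤ π) :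
    Real.sign ξ * Real.sqrt (2 * (1 - Real.cos ξ)) = 2 * Real.sin (ξ / 2) := by
  have hc : Real.cos ξ = 1 - 2 * Real.sin (ξ / 2) ^ 2 := by
    have h1' : Real.cos (2 * (ξ / 2)) = 2 * Real.cos (ξ / 2) ^ 2 - 1 := Real.cos_two_mul _
    have h2 := Real.sin_sq_add_cos_sq (ξ / 2)
    rw [show 2 * (ξ / 2) = ξ by ring] at h1'
    nlinarith
  have hs : Real.sqrt (2 * (1 - Real.cos ξ)) = 2 * |Real.sin (ξ / 2)| := by
    rw [hc]
    have : (2 : ℝ) * (1 - (1 - 2 * Real.sin (ξ / 2) ^ 2)) = (2 * |Real.sin (ξ / 2)|) ^ 2 := by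
      rw [mul_pow, sq_abs]; ring
    rw [this, Real.sqrt_sq (by positivity)]
  rw [hs]
  rcases lt_trichotomy ξ 0 with h | h | h
  · rw [Real.sign_of_neg h]
    have : Real.sin (ξ / 2) ≤ 0 := Real.sin_nonpos_of_nonpos_of_neg_pi_le (by linarith) (by linarith [Real.pi_pos])
    rw [abs_of_nonpos this]; ring
  · simp [h]
  · rw [Real.sign_of_pos h]
    have : 0 ≤ Real.sin (ξ / 2) := Real.sin_nonneg_of_nonneg_of_le_pi (by linarith) (by linarith [Real.pi_pos])
    rw [abs_of_nonneg this]; ring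

/-- the map γ(ξ) = sign(ξ)·√(2(1-cos ξ)) on [-π,π] satisfies
γ(ξ') - γ(ξ) ≥ (ξ'-ξ)²/(4π) whenever -π ≤ ξ ≤ ξ' ≤ π and γ(ξ') > γ(ξ). -/
theorem stmt18 (ξ ξ' : ℝ) (h1 : -π ≤ ξ) (h2 : ξ ≤ ξ') (h3 : ξ' ≤ π)
    (hγ : Real.sign ξ * Real.sqrt (2 * (1 - Real.cos ξ))
        < Real.sign ξ' * Real.sqrt (2 * (1 - Real.cos ξ'))) :
    Real.sign ξ' * Real.sqrt (2 * (1 - Real.cos ξ'))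
        - Real.sign ξ * Real.sqrt (2 * (1 - Real.cos ξ))
      ≥ (ξ' - ξ)^2 / (4 * π) := by
  rw [gamma_eq ξ h1 (by linarith), gamma_eq ξ' (by linarith) h3]
  have hπ := Real.pi_pos
  set d : ℝ := (ξ' - ξ) / 4 with hd
  set m : ℝ := (ξ' + ξ) / 4 with hm
  have hd0 : 0 ≤ d := by simp only [hd]; linarith
  have hd2 : d ≤ π / 2 := by simp only [hd]; linarith
  have hdiff : 2 * Real.sin (ξ' / 2) - 2 * Real.sin (ξ / 2) = 4 * Real.sin d * Real.cos m := by
    have := Real.sin_sub_sin (ξ' / 2) (ξ / 2)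
    have e1 : (ξ' / 2 - ξ / 2) / 2 = d := by simp only [hd]; ring
    have e2 : (ξ' / 2 + ξ / 2) / 2 = m := by simp only [hm]; ring
    rw [e1, e2] at this
    linarith
  have hmabs : |m| ≤ π / 2 - d := by
    rw [abs_le]; constructor <;> simp only [hm, hd] <;> linarith
  have hcos : Real.sin d ≤ Real.cos m := by
    have h1' : Real.cos m = Real.cos |m| := (Real.cos_abs m).symm
    have h2' : Real.cos (π / 2 - d) ≤ Real.cos |m| :=
      Real.cos_le_cos_of_nonneg_of_le_pi (abs_nonneg m) (by linarith) hmabs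
    rw [Real.cos_pi_div_two_sub] at h2'
    linarith
  have hsin : 2 / π * d ≤ Real.sin d := Real.mul_le_sin hd0 hd2
  have hsin0 : 0 ≤ Real.sin d := le_trans (by positivity) hsin
  have key : 4 * Real.sin d * Real.cos m ≥ (ξ' - ξ)^2 / (4 * π) := by
    have hq : 0 ≤ 2 / π * d := by positivity
    have t1 : (2 / π * d) ^ 2 ≤ Real.sin d ^ 2 := by nlinarith
    have t2 : Real.sin d ^ 2 ≤ Real.sin d * Real.cos m := by nlinarith
    have hξd : (ξ' - ξ) ^ 2 = 16 * d ^ 2 := by simp only [hd]; ring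
    have e2 : 4 * (2 / π * d) ^ 2 = 16 * d ^ 2 / π ^ 2 := by field_simp; ring
    have step : 16 * d ^ 2 / (4 * π) ≤ 16 * d ^ 2 / π ^ 2 := by
      rw [div_le_div_iff₀ (by positivity) (by positivity)]
      nlinarith [mul_nonneg (mul_nonneg (sq_nonneg d) hπ.le) (sub_nonneg.2 Real.pi_le_four)]
    rw [ge_iff_le, hξd]
    calc 16 * d ^ 2 / (4 * π) ≤ 16 * d ^ 2 / π ^ 2 := step
      _ = 4 * (2 / π * d) ^ 2 := e2.symm
      _ ≤ 4 * (Real.sin d * Real.cos m) := by nlinarith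
      _ = 4 * Real.sin d * Real.cos m := by ring
  linarith
end
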